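/- (Hölder's inequality) Let f, g : ℝ → ℝ, α > 0, β > 0, and a, b ∈ ℝ with a < b, b ∈ A := {a + kα : k ∈ ℕ₀} and a ∈ B := {b − kβ : k ∈ ℕ₀}. Let p > 1 and q = p/(p−1). If |f| and |g| are α,β-symmetric integrable on [a,b], then |f·g|, |f|^p and |g|^q are α,β-symmetric integrable on [a,b] and ∫_a^b |f(t)·g(t)| d_{α,β}t ≤ (∫_a^b |f(t)|^p d_{α,β}t)^{1/p} · (∫_a^b |g(t)|^q d_{α,β}t)^{1/q}. -/

import Mathlib

/-- The α-forward integral (Nörlund sum) of `f` from `a` to `b`: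
`∫_a^b f(t) Δ_α t = α·∑_{k=0}^∞ f(a+kα) − α·∑_{k=0}^∞ f(b+kα)`. -/
noncomputable def deltaInt (α : ℝ) (f : ℝ → ℝ) (a b : ℝ) : ℝ :=
  α * ∑' k : ℕ, f (a + k * α) - α * ∑' k : ℕ, f (b + k * α)

/-- `f` is α-forward integrable on `[a,b]`: both defining series converge. -/
def ForwardIntegrable (α : ℝ) (f : ℝ → ℝ) (a b : ℝ) : Prop :=
  Summable (fun k : ℕ => f (a + k * α)) ∧ Summable (fun k : ℕ => f (b + k * α))

/-- The β-backward integral of `f` from `a` to `b`: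
`∫_a^b f(t) ∇_β t = β·∑_{k=0}^∞ f(b−kβ) − β·∑_{k=0}^∞ f(a−kβ)`. -/
noncomputable def nablaInt (β : ℝ) (f : ℝ → ℝ) (a b : ℝ) : ℝ :=
  β * ∑' k : ℕ, f (b - k * β) - β * ∑' k : ℕ, f (a - k * β)

/-- `f` is β-backward integrable on `[a,b]`: both defining series converge. -/
def BackwardIntegrable (β : ℝ) (f : ℝ → ℝ) (a b : ℝ) : Prop :=
  Summable (fun k : ℕ => f (a - k * β)) ∧ Summable (fun k : ℕ => f (b - k * β))

/-- `f` is α,β-symmetric integrable on `[a,b]`. -/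
def SymIntegrable (α β : ℝ) (f : ℝ → ℝ) (a b : ℝ) : Prop :=
  ForwardIntegrable α f a b ∧ BackwardIntegrable β f a b

/-- The α,β-symmetric integral of `f` from `a` to `b`. -/
noncomputable def symInt (α β : ℝ) (f : ℝ → ℝ) (a b : ℝ) : ℝ :=
  (α / (α + β)) * deltaInt α f a b + (β / (α + β)) * nablaInt β f a b

/-!
When `b = a + Nα` and `a = b - Mβ`, the series starting at `b` (resp. `a`) is a tail of the one
starting at `a` (resp. `b`), so the symmetric integral is a finite sum `∑ wᵢ h(xᵢ)` with weights
`α²/(α+β)` at the nodes `a + kα` (`k < N`) and `β²/(α+β)` at the nodes `b - kβ` (`k < M`).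
The inequality is then finite Hölder applied to `wᵢ^{1/p} |f(xᵢ)|` and `wᵢ^{1/q} |g(xᵢ)|`.
Integrability holds series by series: `u ^ r ≤ u` once `u ≤ 1`, and `|fg|` is summable by
Hölder's inequality for series.
-/

open Finset

lemma Real.summable_rpow_of_one_le {u : ℕ → ℝ} (h0 : ∀ k, 0 ≤ u k) (hu : Summable u) {r : ℝ}
    (hr : 1 ≤ r) : Summable fun k => u k ^ r := by
  refine hu.of_norm_bounded_eventually_nat ?_
  filter_upwards [hu.tendsto_atTop_zero.eventually_le_const zero_lt_one] with k hk
  rw [Real.norm_of_nonneg (Real.rpow_nonneg (h0 k) r)]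
  exact Real.rpow_le_self_of_le_one (h0 k) hk hr

theorem Real.inner_le_weight_mul_Lp_mul_Lq_of_nonneg {ι : Type*} (s : Finset ι) {p q : ℝ}
    (hpq : p.HolderConjugate q) {w f g : ι → ℝ} (hw : ∀ i ∈ s, 0 ≤ w i)
    (hf : ∀ i ∈ s, 0 ≤ f i) (hg : ∀ i ∈ s, 0 ≤ g i) :
    ∑ i ∈ s, w i * (f i * g i) ≤
      (∑ i ∈ s, w i * f i ^ p) ^ (1 / p) * (∑ i ∈ s, w i * g i ^ q) ^ (1 / q) := by
  have hF : ∀ i ∈ s, 0 ≤ w i ^ (1 / p) * f i := fun i hi =>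
    mul_nonneg (Real.rpow_nonneg (hw i hi) _) (hf i hi)
  have hG : ∀ i ∈ s, 0 ≤ w i ^ (1 / q) * g i := fun i hi =>
    mul_nonneg (Real.rpow_nonneg (hw i hi) _) (hg i hi)
  have hpow : ∀ {r : ℝ}, r ≠ 0 → ∀ {x y : ℝ}, 0 ≤ x → 0 ≤ y → (x ^ (1 / r) * y) ^ r = x * y ^ r :=
    fun hr x y hx hy => by
      rw [Real.mul_rpow (Real.rpow_nonneg hx _) hy, ← Real.rpow_mul hx, one_div_mul_cancel hr,
        Real.rpow_one]
  have hexp : 1 / p + 1 / q = 1 := by rw [one_div, one_div, hpq.inv_add_inv_eq_one]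
  calc ∑ i ∈ s, w i * (f i * g i) = ∑ i ∈ s, (w i ^ (1 / p) * f i) * (w i ^ (1 / q) * g i) := by
        refine sum_congr rfl fun i hi => ?_
        rw [mul_mul_mul_comm, ← Real.rpow_add' (hw i hi) (by rw [hexp]; exact one_ne_zero), hexp,
          Real.rpow_one]
    _ ≤ (∑ i ∈ s, (w i ^ (1 / p) * f i) ^ p) ^ (1 / p) *
          (∑ i ∈ s, (w i ^ (1 / q) * g i) ^ q) ^ (1 / q) :=
        Real.inner_le_Lp_mul_Lq_of_nonneg s hpq hF hG
    _ = _ := by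
        rw [sum_congr rfl fun i hi => hpow hpq.ne_zero (hw i hi) (hf i hi),
          sum_congr rfl fun i hi => hpow hpq.symm.ne_zero (hw i hi) (hg i hi)]

section SymIntegral

variable {α β a b : ℝ}

lemma SymIntegrable.of_summable_comp₂ {h₁ h₂ h : ℝ → ℝ}
    (H : ∀ x : ℕ → ℝ, Summable (fun k => h₁ (x k)) → Summable (fun k => h₂ (x k)) →
      Summable fun k => h (x k))
    (h₁int : SymIntegrable α β h₁ a b) (h₂int : SymIntegrable α β h₂ a b) :
    SymIntegrable α β h a b :=
  ⟨⟨H _ h₁int.1.1 h₂int.1.1, H _ h₁int.1.2 h₂int.1.2⟩,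
    ⟨H _ h₁int.2.1 h₂int.2.1, H _ h₁int.2.2 h₂int.2.2⟩⟩

lemma SymIntegrable.of_summable_comp {h₁ h : ℝ → ℝ}
    (H : ∀ x : ℕ → ℝ, Summable (fun k => h₁ (x k)) → Summable fun k => h (x k))
    (h₁int : SymIntegrable α β h₁ a b) : SymIntegrable α β h a b :=
  SymIntegrable.of_summable_comp₂ (fun x hx _ => H x hx) h₁int h₁int

lemma deltaInt_eq_sum {h : ℝ → ℝ} {N : ℕ} (hb : b = a + N * α)
    (hs : Summable fun k : ℕ => h (a + k * α)) :
    deltaInt α h a b = α * ∑ k ∈ range N, h (a + k * α) := by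
  have htail : (fun k : ℕ => h (a + ((k + N : ℕ) : ℝ) * α)) = fun k : ℕ => h (b + k * α) := by
    funext k; rw [hb]; push_cast; ring_nf
  rw [deltaInt, ← hs.sum_add_tsum_nat_add N, htail]
  ring

lemma nablaInt_eq_sum {h : ℝ → ℝ} {M : ℕ} (ha : a = b - M * β)
    (hs : Summable fun k : ℕ => h (b - k * β)) :
    nablaInt β h a b = β * ∑ k ∈ range M, h (b - k * β) := by
  have htail : (fun k : ℕ => h (b - ((k + M : ℕ) : ℝ) * β)) = fun k : ℕ => h (a - k * β) := by
    funext k; rw [ha]; push_cast; ring_nf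
  rw [nablaInt, ← hs.sum_add_tsum_nat_add M, htail]
  ring

variable (α β a b)

/-- Left copy of `ℕ`: forward nodes `a + kα`; right copy: backward nodes `b - kβ`. -/
def symNode : ℕ ⊕ ℕ → ℝ :=
  Sum.elim (fun k => a + k * α) (fun k => b - k * β)

noncomputable def symWeight : ℕ ⊕ ℕ → ℝ :=
  Sum.elim (fun _ => α / (α + β) * α) (fun _ => β / (α + β) * β)

variable {α β a b}

lemma symWeight_nonneg (hα : 0 ≤ α) (hβ : 0 ≤ β) (i : ℕ ⊕ ℕ) : 0 ≤ symWeight α β i := by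
  cases i <;> simp only [symWeight, Sum.elim_inl, Sum.elim_inr] <;> positivity

lemma symInt_eq_sum {h : ℝ → ℝ} {N M : ℕ} (hb : b = a + N * α) (ha : a = b - M * β)
    (hint : SymIntegrable α β h a b) :
    symInt α β h a b =
      ∑ i ∈ (range N).disjSum (range M), symWeight α β i * h (symNode α β a b i) := by
  rw [symInt, deltaInt_eq_sum hb hint.1.1, nablaInt_eq_sum ha hint.2.2, sum_disjSum, mul_sum,
    mul_sum, mul_sum, mul_sum]
  simp only [symWeight, symNode, Sum.elim_inl, Sum.elim_inr, mul_assoc]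

end SymIntegral

theorem sym_holder_inequality_general (f g : ℝ → ℝ) (α β p q : ℝ) (hα : 0 < α) (hβ : 0 < β)
    (a b : ℝ) (hbA : ∃ k : ℕ, b = a + k * α) (haB : ∃ k : ℕ, a = b - k * β)
    (hp : 1 < p) (hq : q = p / (p - 1))
    (hf : SymIntegrable α β (fun t => |f t|) a b)
    (hg : SymIntegrable α β (fun t => |g t|) a b) :
    SymIntegrable α β (fun t => |f t * g t|) a b ∧
    SymIntegrable α β (fun t => |f t| ^ p) a b ∧
    SymIntegrable α β (fun t => |g t| ^ q) a b ∧
    symInt α β (fun t => |f t * g t|) a b ≤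
      (symInt α β (fun t => |f t| ^ p) a b) ^ (1 / p) *
        (symInt α β (fun t => |g t| ^ q) a b) ^ (1 / q) := by
  obtain ⟨N, hb⟩ := hbA
  obtain ⟨M, ha⟩ := haB
  have hpq : p.HolderConjugate q := (Real.holderConjugate_iff_eq_conjExponent hp).2 hq
  have hfp : SymIntegrable α β (fun t => |f t| ^ p) a b :=
    SymIntegrable.of_summable_comp
      (fun x hx => Real.summable_rpow_of_one_le (fun k => abs_nonneg (f (x k))) hx hp.le) hf
  have hgq : SymIntegrable α β (fun t => |g t| ^ q) a b :=
    SymIntegrable.of_summable_comp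
      (fun x hx => Real.summable_rpow_of_one_le (fun k => abs_nonneg (g (x k))) hx hpq.symm.lt.le)
      hg
  have hfg : SymIntegrable α β (fun t => |f t * g t|) a b := by
    refine SymIntegrable.of_summable_comp₂ (fun x hx hy => ?_) hfp hgq
    simpa only [abs_mul] using Real.summable_mul_of_Lp_Lq_of_nonneg hpq
      (fun _ => abs_nonneg (f _)) (fun _ => abs_nonneg (g _)) hx hy
  refine ⟨hfg, hfp, hgq, ?_⟩
  rw [symInt_eq_sum hb ha hfg, symInt_eq_sum hb ha hfp, symInt_eq_sum hb ha hgq]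
  simpa only [abs_mul] using Real.inner_le_weight_mul_Lp_mul_Lq_of_nonneg _ hpq
    (fun i _ => symWeight_nonneg hα.le hβ.le i) (fun _ _ => abs_nonneg _) (fun _ _ => abs_nonneg _)

theorem sym_holder_inequality (f g : ℝ → ℝ) (α β p q : ℝ) (hα : 0 < α) (hβ : 0 < β)
    (a b : ℝ) (hab : a < b) (hbA : ∃ k : ℕ, b = a + k * α) (haB : ∃ k : ℕ, a = b - k * β)
    (hp : 1 < p) (hq : q = p / (p - 1))
    (hf : SymIntegrable α β (fun t => |f t|) a b)
    (hg : SymIntegrable α β (fun t => |g t|) a b) :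
    SymIntegrable α β (fun t => |f t * g t|) a b ∧
    SymIntegrable α β (fun t => |f t| ^ p) a b ∧
    SymIntegrable α β (fun t => |g t| ^ q) a b ∧
    symInt α β (fun t => |f t * g t|) a b ≤
      (symInt α β (fun t => |f t| ^ p) a b) ^ (1 / p) *
        (symInt α β (fun t => |g t| ^ q) a b) ^ (1 / q) :=
  sym_holder_inequality_general f g α β p q hα hβ a b hbA haB hp hq hf hg
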